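/- arXiv:2501.17590 — 3 statements merged into one kernel-verified Lean document; each statement's English description precedes it below -/
import Mathlib

section
/- Fix integers 0 ≤ r ≤ R and a real number θ. Suppose u is r + 1 times continuously differentiable on an open interval containing x̄. For h > 0 let x_j = x̄ + j·h (j = 0, …, R), let p_h be the unique polynomial of degree at most r minimizing Σ_{i=0}^{R} (q(x_i) − u(x_i))² over polynomials q of degree at most r, and let x_* = x̄ + θ·h. Then there exist constants C > 0 and h₀ > 0 such that |p_h(x_*) − u(x_*)| ≤ C h^{r+1} for all 0 < h < h₀. -/
/-!
Compare the fit `p` with the degree-`r` Taylor polynomial `T` of `u` on a window of width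
`O(h)` containing the stencil and `x_*`, so that `|T - u| ≤ E = O(h^{r+1})` there. Since `T`
competes in the least-squares problem, every nodal residual of `p` is at most `√(R+1) E`, hence
`p - T` is `O(E)` at the nodes `x_0, …, x_r`. Lagrange interpolation at these nodes bounds
`p - T` at `x_*` by the Lebesgue function at `θ`, which does not depend on `h` because the
stencil is an affine image of `0, …, r`.
-/

open Finset

/-- The equispaced stencil node `x_j = x̄ + j·h` (here `xb` denotes `x̄`). -/
noncomputable def stencil (xb h : ℝ) (j : ℕ) : ℝ := xb + j * h

/-- `IsLSQFit r R x u p` says that `p` is a polynomial of degree at most `r`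
minimizing the least-squares functional `∑_{i=0}^{R} (q(x_i) − u(x_i))²` among all
polynomials `q` of degree at most `r`. -/
def IsLSQFit (r R : ℕ) (x : ℕ → ℝ) (u : ℝ → ℝ) (p : Polynomial ℝ) : Prop :=
  p.natDegree ≤ r ∧
    ∀ q : Polynomial ℝ, q.natDegree ≤ r →
      ∑ i ∈ Finset.range (R + 1), (p.eval (x i) - u (x i)) ^ 2 ≤
        ∑ i ∈ Finset.range (R + 1), (q.eval (x i) - u (x i)) ^ 2

open Polynomial
open Set (Icc InjOn)

theorem exists_natDegree_le_eval_eq_taylorWithinEval (f : ℝ → ℝ) (n : ℕ) (s : Set ℝ)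
    (x₀ : ℝ) :
    ∃ T : ℝ[X], T.natDegree ≤ n ∧ ∀ x, T.eval x = taylorWithinEval f n s x₀ x := by
  refine ⟨∑ k ∈ range (n + 1),
    C (iteratedDerivWithin k f s x₀ / k.factorial) * (X - C x₀) ^ k, ?_, fun x => ?_⟩
  · refine natDegree_sum_le_of_forall_le _ _ fun k hk => ?_
    refine natDegree_C_mul_le _ _ |>.trans ?_
    simpa [natDegree_pow, natDegree_X_sub_C] using Nat.lt_succ_iff.mp (mem_range.mp hk)
  · rw [taylor_within_apply, eval_finsetSum]
    refine sum_congr rfl fun k _ => ?_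
    simp only [eval_mul, eval_C, eval_pow, eval_sub, eval_X, smul_eq_mul]
    ring

theorem ContDiffOn.exists_closedBall_abs_iteratedDeriv_le {f : ℝ → ℝ} {n : ℕ} {s : Set ℝ}
    {x : ℝ} (hf : ContDiffOn ℝ n f s) (hs : IsOpen s) (hx : x ∈ s) :
    ∃ δ > 0, Metric.closedBall x δ ⊆ s ∧
      ∃ M ≥ 0, ∀ y ∈ Metric.closedBall x δ, |iteratedDeriv n f y| ≤ M := by
  obtain ⟨δ, hδ, hball⟩ := Metric.nhds_basis_closedBall.mem_iff.mp (hs.mem_nhds hx)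
  have hcont : ContinuousOn (iteratedDeriv n f) s :=
    (hf.continuousOn_iteratedDerivWithin le_rfl hs.uniqueDiffOn).congr
      (iteratedDerivWithin_of_isOpen hs).symm
  obtain ⟨M, hM⟩ := (isCompact_closedBall x δ).exists_bound_of_continuousOn (hcont.mono hball)
  exact ⟨δ, hδ, hball, M, (norm_nonneg _).trans (hM x (Metric.mem_closedBall_self hδ.le)), hM⟩

theorem ContDiffOn.exists_natDegree_le_abs_eval_sub_le {f : ℝ → ℝ} {n : ℕ} {s : Set ℝ}
    {c d M : ℝ} (hf : ContDiffOn ℝ (n + 1) f s) (hs : IsOpen s) (hcd : c < d)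
    (hsub : Icc c d ⊆ s)
    (hM : ∀ y ∈ Icc c d, |iteratedDeriv (n + 1) f y| ≤ M) :
    ∃ T : ℝ[X], T.natDegree ≤ n ∧
      ∀ x ∈ Icc c d, |T.eval x - f x| ≤ M * (d - c) ^ (n + 1) / n.factorial := by
  obtain ⟨T, hTdeg, hT⟩ := exists_natDegree_le_eval_eq_taylorWithinEval f n (Icc c d) c
  refine ⟨T, hTdeg, fun x hx => ?_⟩
  have hderiv : ∀ y ∈ Icc c d,
      iteratedDerivWithin (n + 1) f (Icc c d) y = iteratedDeriv (n + 1) f y := fun y hy =>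
    iteratedDerivWithin_eq_iteratedDeriv (uniqueDiffOn_Icc hcd)
      (by exact_mod_cast hf.contDiffAt (hs.mem_nhds (hsub hy))) hy
  have hM₀ : 0 ≤ M := (abs_nonneg _).trans (hM c (Set.left_mem_Icc.mpr hcd.le))
  calc |T.eval x - f x| ≤ M * (x - c) ^ (n + 1) / n.factorial := by
        rw [abs_sub_comm, hT]
        exact taylor_mean_remainder_bound hcd.le (hf.mono hsub) hx
          fun y hy => (hderiv y hy).symm ▸ hM y hy
    _ ≤ M * (d - c) ^ (n + 1) / n.factorial := by
        gcongr
        · linarith [hx.1]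
        · exact hx.2

theorem abs_eval_le_mul_sum_abs_eval_basis {ι : Type*} [DecidableEq ι] {s : Finset ι}
    {v : ι → ℝ} {p : ℝ[X]} {B : ℝ} (hvs : InjOn v s) (hp : p.degree < #s)
    (hB : ∀ i ∈ s, |p.eval (v i)| ≤ B) (t : ℝ) :
    |p.eval t| ≤ B * ∑ i ∈ s, |(Lagrange.basis s v i).eval t| := by
  conv_lhs => rw [Lagrange.eq_interpolate hvs hp, Lagrange.interpolate_apply, eval_finsetSum]
  rw [mul_sum]
  refine (abs_sum_le_sum_abs _ _).trans (sum_le_sum fun i hi => ?_)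
  rw [eval_mul, eval_C, abs_mul]
  exact mul_le_mul_of_nonneg_right (hB i hi) (abs_nonneg _)

-- `∑ᵢ |ℓᵢ(θ)|` for the Lagrange basis `ℓᵢ` of the nodes `0, …, r`.
noncomputable def lebesgueFun (r : ℕ) (θ : ℝ) : ℝ :=
  ∑ i ∈ range (r + 1), ∏ k ∈ (range (r + 1)).erase i, |θ - k| / |(i : ℝ) - k|

theorem lebesgueFun_nonneg (r : ℕ) (θ : ℝ) : 0 ≤ lebesgueFun r θ :=
  sum_nonneg fun _ _ => prod_nonneg fun _ _ => by positivity

theorem eval_basis_stencil {xb h : ℝ} (hh : h ≠ 0) (s : Finset ℕ) (i : ℕ) (θ : ℝ) :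
    (Lagrange.basis s (stencil xb h) i).eval (xb + θ * h) =
      ∏ k ∈ s.erase i, (θ - k) / ((i : ℝ) - k) := by
  rw [Lagrange.basis, eval_prod]
  refine prod_congr rfl fun k _ => ?_
  simp only [Lagrange.basisDivisor, eval_mul, eval_C, eval_sub, eval_X, stencil]
  rw [inv_mul_eq_div, show xb + θ * h - (xb + k * h) = (θ - k) * h by ring,
    show xb + i * h - (xb + k * h) = (i - k) * h by ring, mul_div_mul_right _ _ hh]

theorem abs_eval_le_lebesgueFun_mul {r : ℕ} {xb h B : ℝ} {p : ℝ[X]} (hh : h ≠ 0)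
    (hp : p.natDegree ≤ r) (hB : ∀ j ≤ r, |p.eval (stencil xb h j)| ≤ B) (θ : ℝ) :
    |p.eval (xb + θ * h)| ≤ lebesgueFun r θ * B := by
  have hinj : InjOn (stencil xb h) (range (r + 1)) := fun i _ j _ hij => by
    simpa [stencil, hh] using hij
  have hdeg : p.degree < #(range (r + 1)) := by
    rw [card_range]
    exact (degree_le_of_natDegree_le hp).trans_lt (by exact_mod_cast Nat.lt_succ_self r)
  refine (abs_eval_le_mul_sum_abs_eval_basis hinj hdeg
    (fun j hj => hB j (Nat.lt_succ_iff.mp (mem_range.mp hj))) _).trans_eq ?_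
  simp only [eval_basis_stencil hh, abs_prod, abs_div, lebesgueFun, mul_comm B]

theorem IsLSQFit.abs_eval_sub_le_sqrt_mul {r R : ℕ} {x : ℕ → ℝ} {u : ℝ → ℝ} {p q : ℝ[X]}
    {E : ℝ} (hp : IsLSQFit r R x u p) (hq : q.natDegree ≤ r)
    (hE : ∀ j ≤ R, |q.eval (x j) - u (x j)| ≤ E) {j : ℕ} (hj : j ≤ R) :
    |p.eval (x j) - u (x j)| ≤ √((R : ℝ) + 1) * E := by
  have hE₀ : 0 ≤ E := (abs_nonneg _).trans (hE 0 R.zero_le)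
  have hqsum : ∑ i ∈ range (R + 1), (q.eval (x i) - u (x i)) ^ 2 ≤ ((R : ℝ) + 1) * E ^ 2 :=
    calc ∑ i ∈ range (R + 1), (q.eval (x i) - u (x i)) ^ 2
        ≤ ∑ _i ∈ range (R + 1), E ^ 2 := sum_le_sum fun i hi =>
          sq_le_sq.mpr ((hE i (Nat.lt_succ_iff.mp (mem_range.mp hi))).trans (le_abs_self E))
      _ = ((R : ℝ) + 1) * E ^ 2 := by simp
  calc |p.eval (x j) - u (x j)|
      ≤ √(∑ i ∈ range (R + 1), (q.eval (x i) - u (x i)) ^ 2) := Real.abs_le_sqrt <|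
        (single_le_sum (f := fun i => (p.eval (x i) - u (x i)) ^ 2) (fun i _ => sq_nonneg _)
          (mem_range.mpr (Nat.lt_succ_of_le hj))).trans (hp.2 q hq)
    _ ≤ √(((R : ℝ) + 1) * E ^ 2) := Real.sqrt_le_sqrt hqsum
    _ = √((R : ℝ) + 1) * E := by rw [Real.sqrt_mul (by positivity), Real.sqrt_sq hE₀]

theorem IsLSQFit.abs_eval_sub_le_lebesgueFun_mul {r R : ℕ} {xb h θ E : ℝ} {u : ℝ → ℝ}
    {p T : ℝ[X]} (hp : IsLSQFit r R (stencil xb h) u p) (hrR : r ≤ R) (hh : h ≠ 0)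
    (hT : T.natDegree ≤ r)
    (hnodes : ∀ j ≤ R, |T.eval (stencil xb h j) - u (stencil xb h j)| ≤ E)
    (hθ : |T.eval (xb + θ * h) - u (xb + θ * h)| ≤ E) :
    |p.eval (xb + θ * h) - u (xb + θ * h)| ≤
      (lebesgueFun r θ * (√((R : ℝ) + 1) + 1) + 1) * E := by
  have hdiff : ∀ j ≤ r, |(p - T).eval (stencil xb h j)| ≤ (√((R : ℝ) + 1) + 1) * E :=
    fun j hj => by
      rw [eval_sub, add_one_mul, ← sub_sub_sub_cancel_right _ _ (u (stencil xb h j))]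
      exact (abs_sub _ _).trans (add_le_add
        (hp.abs_eval_sub_le_sqrt_mul hT hnodes (hj.trans hrR)) (hnodes j (hj.trans hrR)))
  have hpT := abs_eval_le_lebesgueFun_mul hh ((natDegree_sub_le _ _).trans (max_le hp.1 hT))
    hdiff θ
  calc |p.eval (xb + θ * h) - u (xb + θ * h)|
      = |(p - T).eval (xb + θ * h) + (T.eval (xb + θ * h) - u (xb + θ * h))| := by
        rw [eval_sub, sub_add_sub_cancel]
    _ ≤ lebesgueFun r θ * ((√((R : ℝ) + 1) + 1) * E) + E :=
        (abs_add_le _ _).trans (add_le_add hpT hθ)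
    _ = (lebesgueFun r θ * (√((R : ℝ) + 1) + 1) + 1) * E := by ring

/-- if `u` is `r + 1` times continuously differentiable on an open
interval containing `x̄`, `p_h` is the degree-`r` least-squares fit of the nodal
values on the equispaced stencil `x_j = x̄ + j·h`, and `x_* = x̄ + θ·h`, then there
are `C > 0` and `h₀ > 0` with `|p_h(x_*) − u(x_*)| ≤ C h^{r+1}` for `0 < h < h₀`. -/
theorem least_squares_fit_accuracy (r R : ℕ) (hrR : r ≤ R) (θ : ℝ)
    (u : ℝ → ℝ) (xb a b : ℝ) (ha : a < xb) (hb : xb < b)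
    (hu : ContDiffOn ℝ (r + 1) u (Set.Ioo a b)) :
    ∃ C > 0, ∃ h₀ > 0, ∀ h, 0 < h → h < h₀ →
      ∀ p : Polynomial ℝ, IsLSQFit r R (stencil xb h) u p →
        |p.eval (xb + θ * h) - u (xb + θ * h)| ≤ C * h ^ (r + 1) := by
  obtain ⟨δ, hδ, hball, M, hM₀, hM⟩ :=
    hu.exists_closedBall_abs_iteratedDeriv_le isOpen_Ioo ⟨ha, hb⟩
  set ρ : ℝ := |θ| + R + 1
  set K :=
    (lebesgueFun r θ * (√((R : ℝ) + 1) + 1) + 1) * (M * (2 * ρ) ^ (r + 1) / r.factorial)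
  have hK : 0 ≤ K := by have := lebesgueFun_nonneg r θ; positivity
  refine ⟨K + 1, by positivity, δ / ρ, by positivity, fun h hh hhδ p hp => ?_⟩
  have hwindow : Icc (xb - ρ * h) (xb + ρ * h) ⊆ Metric.closedBall xb δ := by
    rw [← Real.closedBall_eq_Icc]
    exact Metric.closedBall_subset_closedBall ((lt_div_iff₀' (by positivity)).mp hhδ).le
  have hmem : ∀ t : ℝ, |t| ≤ ρ → xb + t * h ∈ Icc (xb - ρ * h) (xb + ρ * h) :=
    fun t ht => Set.mem_Icc_iff_abs_le.mp <| by
      rw [sub_add_cancel_left, abs_neg, abs_mul, abs_of_pos hh]; gcongr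
  obtain ⟨T, hTdeg, hT⟩ := hu.exists_natDegree_le_abs_eval_sub_le isOpen_Ioo
    (by linarith [mul_pos (by positivity : 0 < ρ) hh]) (hwindow.trans hball)
    fun y hy => hM y (hwindow hy)
  calc |p.eval (xb + θ * h) - u (xb + θ * h)|
      ≤ (lebesgueFun r θ * (√((R : ℝ) + 1) + 1) + 1) *
          (M * (xb + ρ * h - (xb - ρ * h)) ^ (r + 1) / r.factorial) :=
        hp.abs_eval_sub_le_lebesgueFun_mul hrR hh.ne' hTdeg
          (fun j hj => hT _ (hmem j (by rw [Nat.abs_cast]; linarith [abs_nonneg θ,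
            (Nat.cast_le.mpr hj : (j : ℝ) ≤ R)])))
          (hT _ (hmem θ (by linarith [(Nat.cast_nonneg R : (0 : ℝ) ≤ R)])))
    _ = K * h ^ (r + 1) := by
        rw [show xb + ρ * h - (xb - ρ * h) = 2 * ρ * h by ring, mul_pow (2 * ρ) h]
        simp only [K]; ring
    _ ≤ (K + 1) * h ^ (r + 1) := by gcongr; linarith
end

section
/- In the piecewise-smooth setting with a jump located between x_{k0} and x_{k0+1}, let k be an index with 0 ≤ k ≤ R − r0 such that the substencil {x_k, …, x_{k+r0}} straddles the jump, i.e. k ≤ k0 ≤ k + r0 − 1. Then there exist constants c > 0 and h₀ > 0 such that the smoothness indicator satisfies I_k ≥ c for all 0 < h < h₀. -/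
open Finset

/-- `interpPoly r0 xb h u k` is the unique polynomial of degree at most `r0`
interpolating `u` at the nodes `x_k, …, x_{k+r0}`. -/
noncomputable def interpPoly (r0 : ℕ) (xb h : ℝ) (u : ℝ → ℝ) (k : ℕ) : Polynomial ℝ :=
  Lagrange.interpolate (Finset.range (r0 + 1)) (fun j => stencil xb h (k + j))
    (fun j => u (stencil xb h (k + j)))

/-- The smoothness indicator
`I_k = (1/r0) · ∑_{ℓ=1}^{r0} h^{2ℓ−1} ∫_{x_0}^{x_R} (p_k^{(ℓ)}(x))² dx`. -/
noncomputable def smoothInd (r0 R : ℕ) (xb h : ℝ) (u : ℝ → ℝ) (k : ℕ) : ℝ :=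
  (1 / (r0 : ℝ)) * ∑ ℓ ∈ Finset.Icc 1 r0,
    h ^ (2 * ℓ - 1) *
      ∫ t in (stencil xb h 0)..(stencil xb h R),
        ((Polynomial.derivative^[ℓ] (interpPoly r0 xb h u k)).eval t) ^ 2

section Aux

open MeasureTheory intervalIntegral

/-- Integral of the square of a nonzero polynomial over a nondegenerate interval is positive. -/
lemma aux_integral_sq_pos (P : Polynomial ℝ) (hP : P ≠ 0) {a b : ℝ} (hab : a < b) :
    0 < ∫ s in a..b, (P.eval s) ^ 2 := by
  have hcont : Continuous fun s : ℝ => (P.eval s) ^ 2 := P.continuous.pow 2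
  rw [intervalIntegral.integral_pos_iff_support_of_nonneg_ae
    (Filter.Eventually.of_forall fun s => sq_nonneg _) (hcont.intervalIntegrable a b)]
  refine ⟨hab, ?_⟩
  have hsub : Set.Ioc a b \ {x | P.IsRoot x}
      ⊆ Function.support (fun s => (P.eval s) ^ 2) ∩ Set.Ioc a b := by
    rintro x ⟨hx1, hx2⟩
    refine ⟨?_, hx1⟩
    simp only [Function.mem_support]
    intro hx
    exact hx2 ((pow_eq_zero_iff two_ne_zero).mp hx)
  have hroots : (volume : Measure ℝ) (Set.Ioc a b ∩ {x | P.IsRoot x}) = 0 :=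
    measure_mono_null Set.inter_subset_right
      ((Polynomial.finite_setOf_isRoot hP).measure_zero _)
  calc (0 : ENNReal) < volume (Set.Ioc a b) := by
        rw [Real.volume_Ioc]; exact ENNReal.ofReal_pos.mpr (sub_pos.mpr hab)
    _ = volume (Set.Ioc a b \ {x | P.IsRoot x}) := (measure_diff_null' hroots).symm
    _ ≤ volume (Function.support (fun s => (P.eval s) ^ 2) ∩ Set.Ioc a b) :=
        measure_mono hsub

/-- The limiting nodal values on the unit stencil. -/
noncomputable def auxVals (v w : ℝ → ℝ) (ξ θ : ℝ) (k k0 : ℕ) (t : ℝ) (j : ℕ) : ℝ :=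
  if k + j ≤ k0 then v (ξ + (((k : ℝ) + j) - k0 - θ) * t)
  else w (ξ + (((k : ℝ) + j) - k0 - θ) * t)

/-- The rescaled first-derivative energy. -/
noncomputable def auxG (r0 : ℕ) (v w : ℝ → ℝ) (ξ θ : ℝ) (k k0 : ℕ) (t : ℝ) : ℝ :=
  ∫ s in (0 : ℝ)..(r0 : ℝ),
    ((Polynomial.derivative (Lagrange.interpolate (Finset.range (r0 + 1))
      (fun j => (j : ℝ)) (auxVals v w ξ θ k k0 t))).eval s) ^ 2

lemma aux_inj (n : ℕ) : Set.InjOn (fun j : ℕ => (j : ℝ)) (Finset.range n) :=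
  fun a _ b _ hab => Nat.cast_injective hab

lemma auxG_eval (r0 : ℕ) (v w : ℝ → ℝ) (ξ θ : ℝ) (k k0 : ℕ) (t s : ℝ) :
    (Polynomial.derivative (Lagrange.interpolate (Finset.range (r0 + 1))
      (fun j => (j : ℝ)) (auxVals v w ξ θ k k0 t))).eval s
    = ∑ j ∈ Finset.range (r0 + 1), auxVals v w ξ θ k k0 t j *
        (Polynomial.derivative (Lagrange.basis (Finset.range (r0 + 1))
          (fun i => (i : ℝ)) j)).eval s := by
  rw [Lagrange.interpolate_apply, map_sum, Polynomial.eval_finset_sum]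
  exact Finset.sum_congr rfl fun j _ => by
    rw [Polynomial.derivative_C_mul, Polynomial.eval_mul, Polynomial.eval_C]

lemma auxG_continuous (r0 : ℕ) (v w : ℝ → ℝ) (hv : Continuous v) (hw : Continuous w)
    (ξ θ : ℝ) (k k0 : ℕ) : Continuous (auxG r0 v w ξ θ k k0) := by
  classical
  set n := r0 + 1 with hn
  set b : ℕ → ℝ → ℝ := fun j s =>
    (Polynomial.derivative (Lagrange.basis (Finset.range n) (fun i => (i : ℝ)) j)).eval s
    with hb
  have hb_cont : ∀ j, Continuous (b j) := fun j =>
    (Polynomial.derivative (Lagrange.basis (Finset.range n) (fun i => (i : ℝ)) j)).continuous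
  set M : ℕ → ℕ → ℝ := fun i j => ∫ s in (0 : ℝ)..(r0 : ℝ), b i s * b j s with hM
  have hvals_cont : ∀ j, Continuous fun t => auxVals v w ξ θ k k0 t j := by
    intro j
    by_cases hcase : k + j ≤ k0
    · simp only [auxVals, if_pos hcase]
      exact hv.comp (by fun_prop)
    · simp only [auxVals, if_neg hcase]
      exact hw.comp (by fun_prop)
  have hG_eq : ∀ t, auxG r0 v w ξ θ k k0 t
      = ∑ i ∈ Finset.range n, ∑ j ∈ Finset.range n,
          (auxVals v w ξ θ k k0 t i * auxVals v w ξ θ k k0 t j) * M i j := by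
    intro t
    have h1 : ∀ s : ℝ,
        ((Polynomial.derivative (Lagrange.interpolate (Finset.range n)
          (fun j => (j : ℝ)) (auxVals v w ξ θ k k0 t))).eval s) ^ 2
        = ∑ i ∈ Finset.range n, ∑ j ∈ Finset.range n,
            (auxVals v w ξ θ k k0 t i * auxVals v w ξ θ k k0 t j) * (b i s * b j s) := by
      intro s
      rw [sq, auxG_eval, Finset.sum_mul_sum]
      exact Finset.sum_congr rfl fun i _ => Finset.sum_congr rfl fun j _ => by ring
    unfold auxG
    rw [intervalIntegral.integral_congr (g := fun s => ∑ i ∈ Finset.range n,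
        ∑ j ∈ Finset.range n,
          (auxVals v w ξ θ k k0 t i * auxVals v w ξ θ k k0 t j) * (b i s * b j s))
        (fun s _ => h1 s)]
    rw [intervalIntegral.integral_finset_sum]
    · refine Finset.sum_congr rfl fun i _ => ?_
      rw [intervalIntegral.integral_finset_sum]
      · exact Finset.sum_congr rfl fun j _ => intervalIntegral.integral_const_mul _ _
      · intro j _
        exact (Continuous.intervalIntegrable
          (continuous_const.mul ((hb_cont i).mul (hb_cont j))) _ _)
    · intro i _
      exact Continuous.intervalIntegrable
        (continuous_finset_sum _ fun j _ =>
          continuous_const.mul ((hb_cont i).mul (hb_cont j))) _ _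
  have : Continuous fun t => ∑ i ∈ Finset.range n, ∑ j ∈ Finset.range n,
      (auxVals v w ξ θ k k0 t i * auxVals v w ξ θ k k0 t j) * M i j := by
    refine continuous_finset_sum _ fun i _ => continuous_finset_sum _ fun j _ => ?_
    exact ((hvals_cont i).mul (hvals_cont j)).mul continuous_const
  exact (funext hG_eq : auxG r0 v w ξ θ k k0 = _) ▸ this


lemma auxG_pos (r0 : ℕ) (hr0 : 1 ≤ r0) (v w : ℝ → ℝ) (ξ θ : ℝ) (hjump : v ξ ≠ w ξ)
    (k k0 : ℕ) (hkl : k ≤ k0) (hkr : k0 ≤ k + r0 - 1) :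
    0 < auxG r0 v w ξ θ k k0 0 := by
  classical
  set n := r0 + 1 with hn
  set q0 := Lagrange.interpolate (Finset.range n) (fun j : ℕ => (j : ℝ))
    (auxVals v w ξ θ k k0 0) with hq0def
  have hq0 : Polynomial.derivative q0 ≠ 0 := by
    intro h0
    obtain ⟨a, ha⟩ := Polynomial.natDegree_eq_zero.mp
      (Polynomial.natDegree_eq_zero_of_derivative_eq_zero h0)
    have hd_mem : k0 - k ∈ Finset.range n := Finset.mem_range.mpr (by omega)
    have hd1_mem : k0 - k + 1 ∈ Finset.range n := Finset.mem_range.mpr (by omega)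
    have e1 : q0.eval (((k0 - k : ℕ)) : ℝ) = v ξ := by
      rw [hq0def, Lagrange.eval_interpolate_at_node _ (aux_inj n) hd_mem]
      have hc : k + (k0 - k) ≤ k0 := by omega
      simp [auxVals, hc]
    have e2 : q0.eval (((k0 - k + 1 : ℕ)) : ℝ) = w ξ := by
      rw [hq0def, Lagrange.eval_interpolate_at_node _ (aux_inj n) hd1_mem]
      have hc : ¬ (k + (k0 - k + 1) ≤ k0) := by omega
      simp [auxVals, hc]
    rw [← ha] at e1 e2
    simp only [Polynomial.eval_C] at e1 e2
    exact hjump (e1 ▸ e2 ▸ rfl)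
  have hr0' : (0 : ℝ) < r0 := by exact_mod_cast hr0
  exact aux_integral_sq_pos _ hq0 hr0'

lemma auxG_eq_energy (r0 : ℕ) (v w u : ℝ → ℝ) (ξ θ : ℝ) (hθ0 : 0 < θ) (hθ1 : θ < 1)
    (hu : ∀ x, u x = if x < ξ then v x else w x)
    (k k0 : ℕ) (h : ℝ) (hh : 0 < h) :
    auxG r0 v w ξ θ k k0 h
      = h * ∫ t in (stencil (ξ - ((k0 : ℝ) + θ) * h) h k)..
            (stencil (ξ - ((k0 : ℝ) + θ) * h) h k + r0 * h),
          ((Polynomial.derivative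
            (interpPoly r0 (ξ - ((k0 : ℝ) + θ) * h) h u k)).eval t) ^ 2 := by
  classical
  set n := r0 + 1 with hn
  set xb : ℝ := ξ - ((k0 : ℝ) + θ) * h with hxb
  set p := interpPoly r0 xb h u k with hp
  set xk : ℝ := stencil xb h k with hxk
  set f : ℝ → ℝ := fun t => ((Polynomial.derivative p).eval t) ^ 2 with hf
  have hh' : h ≠ 0 := ne_of_gt hh
  -- injectivity of the scaled nodes
  have hinj2 : Set.InjOn (fun j : ℕ => stencil xb h (k + j)) (Finset.range n) := by
    intro a _ b _ hab
    simp only [stencil] at hab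
    have : ((k + a : ℕ) : ℝ) = ((k + b : ℕ) : ℝ) := by
      have := add_left_cancel hab
      exact mul_right_cancel₀ hh' this
    have := Nat.cast_injective this
    omega
  -- evals of p at nodes
  have hpeval : ∀ j ∈ Finset.range n, p.eval (stencil xb h (k + j))
      = auxVals v w ξ θ k k0 h j := by
    intro j hj
    rw [hp, interpPoly, Lagrange.eval_interpolate_at_node _ hinj2 hj]
    have hnode : stencil xb h (k + j) = ξ + (((k : ℝ) + j) - k0 - θ) * h := by
      simp only [stencil, hxb]
      push_cast
      ring
    rw [hu, hnode]
    by_cases hcase : k + j ≤ k0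
    · have hkj : ((k : ℝ) + j) ≤ k0 := by exact_mod_cast hcase
      have hlt : ξ + (((k : ℝ) + j) - k0 - θ) * h < ξ := by nlinarith
      rw [if_pos hlt]
      simp only [auxVals]
      rw [if_pos hcase]
    · have hkj : (k0 : ℝ) + 1 ≤ (k : ℝ) + j := by
        have : k0 + 1 ≤ k + j := by omega
        exact_mod_cast this
      have hge : ¬ (ξ + (((k : ℝ) + j) - k0 - θ) * h < ξ) := by
        push_neg
        nlinarith
      rw [if_neg hge]
      simp only [auxVals]
      rw [if_neg hcase]
  -- the composed polynomial
  set L : Polynomial ℝ := Polynomial.C xk + Polynomial.C h * Polynomial.X with hL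
  have hLeval : ∀ s : ℝ, L.eval s = xk + h * s := by intro s; simp [hL]
  set q := p.comp L with hq
  have hqeval : ∀ s : ℝ, q.eval s = p.eval (xk + h * s) := by
    intro s; rw [hq, Polynomial.eval_comp, hLeval]
  have hLdeg : L.natDegree = 1 := by
    have := Polynomial.natDegree_linear (a := h) (b := xk) hh'
    rw [hL, add_comm]
    exact this
  have hdegp : p.degree < (n : ℕ) := by
    rw [hp, interpPoly]
    simpa using Lagrange.degree_interpolate_lt _ hinj2
  have hqdeg : q.degree < ((Finset.range n).card : ℕ) := by
    rw [Finset.card_range]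
    by_cases hq0 : q = 0
    · rw [hq0, Polynomial.degree_zero]
      exact WithBot.bot_lt_coe _
    · rw [← Polynomial.natDegree_lt_iff_degree_lt hq0]
      have hqn : q.natDegree = p.natDegree := by
        rw [hq, Polynomial.natDegree_comp, hLdeg, mul_one]
      rw [hqn]
      by_cases hp0 : p = 0
      · rw [hp0, Polynomial.natDegree_zero]; omega
      · exact Nat.lt_of_lt_of_le
          ((Polynomial.natDegree_lt_iff_degree_lt hp0).mpr hdegp) le_rfl
  have hq_interp : q = Lagrange.interpolate (Finset.range n) (fun j : ℕ => (j : ℝ))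
      (auxVals v w ξ θ k k0 h) := by
    refine Lagrange.eq_interpolate_of_eval_eq _ (aux_inj n) hqdeg ?_
    intro j hj
    show q.eval ((j : ℝ)) = _
    rw [hqeval]
    have hx : xk + h * (j : ℝ) = stencil xb h (k + j) := by
      simp only [hxk, stencil]
      push_cast
      ring
    rw [hx]
    exact hpeval j hj
  have hqderiv : Polynomial.derivative q
      = Polynomial.C h * (Polynomial.derivative p).comp L := by
    rw [hq, Polynomial.derivative_comp]
    congr 1
    rw [hL]
    simp
  have hqp_eval2 : ∀ s : ℝ,
      (Polynomial.derivative (Lagrange.interpolate (Finset.range n)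
        (fun j : ℕ => (j : ℝ)) (auxVals v w ξ θ k k0 h))).eval s
      = h * (Polynomial.derivative p).eval (xk + h * s) := by
    intro s
    rw [← hq_interp, hqderiv]
    rw [Polynomial.eval_mul, Polynomial.eval_C, Polynomial.eval_comp, hLeval]
  -- rescale the integral
  have key : ∀ s : ℝ,
      ((Polynomial.derivative (Lagrange.interpolate (Finset.range n)
        (fun j : ℕ => (j : ℝ)) (auxVals v w ξ θ k k0 h))).eval s) ^ 2
      = h ^ 2 * f (xk + h * s) := by
    intro s
    rw [hqp_eval2, hf]
    ring
  unfold auxG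
  rw [intervalIntegral.integral_congr (g := fun s => h ^ 2 * f (xk + h * s))
    (fun s _ => key s)]
  rw [intervalIntegral.integral_const_mul]
  rw [intervalIntegral.integral_comp_add_mul f hh' xk]
  rw [smul_eq_mul, mul_zero, add_zero]
  rw [show xk + h * (r0 : ℝ) = xk + (r0 : ℝ) * h by ring]
  rw [← mul_assoc]
  congr 1
  field_simp

end Aux

/-- in the piecewise-smooth setting (jump at `ξ`, stencil anchored by
`x̄ = ξ − (k0 + θ)h` so that `x_{k0} < ξ < x_{k0+1}`), if the substencil
`{x_k, …, x_{k+r0}}` straddles the jump, i.e. `k ≤ k0 ≤ k + r0 − 1`, then there are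
`c > 0` and `h₀ > 0` such that `I_k ≥ c` for all `0 < h < h₀`. -/
theorem smoothInd_bounded_below_of_jump (r0 R : ℕ) (hr0 : 1 ≤ r0) (hR : r0 ≤ R)
    (v w : ℝ → ℝ) (hv : ContDiff ℝ (⊤ : ℕ∞) v) (hw : ContDiff ℝ (⊤ : ℕ∞) w)
    (ξ : ℝ) (hjump : v ξ ≠ w ξ)
    (u : ℝ → ℝ) (hu : ∀ x, u x = if x < ξ then v x else w x)
    (k0 : ℕ) (hk0 : k0 < R) (θ : ℝ) (hθ0 : 0 < θ) (hθ1 : θ < 1)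
    (k : ℕ) (hk : k ≤ R - r0) (hkl : k ≤ k0) (hkr : k0 ≤ k + r0 - 1) :
    ∃ c > 0, ∃ h₀ > 0, ∀ h, 0 < h → h < h₀ →
      c ≤ smoothInd r0 R (ξ - (k0 + θ) * h) h u k := by
  classical
  have hr0' : (0 : ℝ) < r0 := by exact_mod_cast hr0
  have hG0 : 0 < auxG r0 v w ξ θ k k0 0 := auxG_pos r0 hr0 v w ξ θ hjump k k0 hkl hkr
  have hGc : Continuous (auxG r0 v w ξ θ k k0) :=
    auxG_continuous r0 v w hv.continuous hw.continuous ξ θ k k0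
  have hev : ∀ᶠ t in nhds (0 : ℝ),
      auxG r0 v w ξ θ k k0 0 / 2 < auxG r0 v w ξ θ k k0 t :=
    (hGc.continuousAt).eventually (eventually_gt_nhds (by linarith))
  obtain ⟨ε, hε, hball⟩ := Metric.eventually_nhds_iff.mp hev
  refine ⟨(1 / (r0 : ℝ)) * (auxG r0 v w ξ θ k k0 0 / 2),
    mul_pos (by positivity) (by linarith), ε, hε, fun h hh hhε => ?_⟩
  have hGh : auxG r0 v w ξ θ k k0 0 / 2 < auxG r0 v w ξ θ k k0 h := by
    apply hball
    simpa [Real.dist_eq, abs_of_pos hh] using hhε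
  have hEn := auxG_eq_energy r0 v w u ξ θ hθ0 hθ1 hu k k0 h hh
  set xb : ℝ := ξ - ((k0 : ℝ) + θ) * h with hxb
  set p := interpPoly r0 xb h u k with hp
  have hfc : Continuous fun t : ℝ => ((Polynomial.derivative p).eval t) ^ 2 :=
    (Polynomial.derivative p).continuous.pow 2
  have hk_le : k + r0 ≤ R := by omega
  have hkR : ((k : ℝ) + r0) ≤ R := by exact_mod_cast hk_le
  have hmono : (∫ t in (stencil xb h k)..(stencil xb h k + r0 * h),
        ((Polynomial.derivative p).eval t) ^ 2)
      ≤ ∫ t in (stencil xb h 0)..(stencil xb h R),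
        ((Polynomial.derivative p).eval t) ^ 2 := by
    apply intervalIntegral.integral_mono_interval
    · simp only [stencil, Nat.cast_zero, zero_mul]
      nlinarith [mul_nonneg (Nat.cast_nonneg k : (0:ℝ) ≤ k) hh.le]
    · nlinarith [mul_nonneg (Nat.cast_nonneg r0 : (0:ℝ) ≤ r0) hh.le]
    · simp only [stencil]
      nlinarith [mul_le_mul_of_nonneg_right hkR hh.le]
    · exact Filter.Eventually.of_forall fun t => sq_nonneg _
    · exact hfc.intervalIntegrable _ _
  have hnonneg : ∀ ℓ ∈ Finset.Icc 1 r0,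
      0 ≤ h ^ (2 * ℓ - 1) * ∫ t in (stencil xb h 0)..(stencil xb h R),
        ((Polynomial.derivative^[ℓ] p).eval t) ^ 2 := by
    intro ℓ _
    refine mul_nonneg (pow_nonneg hh.le _)
      (intervalIntegral.integral_nonneg ?_ fun t _ => sq_nonneg _)
    simp only [stencil, Nat.cast_zero, zero_mul]
    nlinarith [mul_nonneg (Nat.cast_nonneg R : (0:ℝ) ≤ R) hh.le]
  have hsingle := Finset.single_le_sum hnonneg (Finset.mem_Icc.mpr ⟨le_refl 1, hr0⟩)
  calc (1 / (r0 : ℝ)) * (auxG r0 v w ξ θ k k0 0 / 2)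
      ≤ (1 / (r0 : ℝ)) * auxG r0 v w ξ θ k k0 h :=
        mul_le_mul_of_nonneg_left (le_of_lt hGh) (by positivity)
    _ = (1 / (r0 : ℝ)) * (h * ∫ t in (stencil xb h k)..(stencil xb h k + r0 * h),
          ((Polynomial.derivative p).eval t) ^ 2) := by rw [hEn]
    _ ≤ (1 / (r0 : ℝ)) * (h * ∫ t in (stencil xb h 0)..(stencil xb h R),
          ((Polynomial.derivative p).eval t) ^ 2) :=
        mul_le_mul_of_nonneg_left (mul_le_mul_of_nonneg_left hmono hh.le) (by positivity)
    _ ≤ smoothInd r0 R xb h u k := by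
        rw [smoothInd, ← hp]
        refine mul_le_mul_of_nonneg_left ?_ (by positivity)
        have h1 : h * ∫ t in (stencil xb h 0)..(stencil xb h R),
            ((Polynomial.derivative p).eval t) ^ 2
            = h ^ (2 * 1 - 1) * ∫ t in (stencil xb h 0)..(stencil xb h R),
              ((Polynomial.derivative^[1] p).eval t) ^ 2 := by
          norm_num
        rw [h1]
        exact hsingle
end

section
/- Suppose u is r0 + 1 times continuously differentiable on an open interval containing x̄. Then there exist constants C > 0 and h₀ > 0 such that for every 0 < h < h₀ and every 0 ≤ k ≤ R − r0, the smoothness indicator satisfies I_k ≤ C h². -/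
open Finset

/-!
Substituting `x = x_k + h s` maps the nodes `x_k, …, x_{k+r0}` to the reference nodes
`0, …, r0`, so `h^ℓ p_k^{(ℓ)}(x) = q^{(ℓ)}(s)`, where `q` interpolates the differences
`u(x_{k+j}) - u(x_k)` at the reference nodes (for `ℓ ≥ 1` the constant `u(x_k)` is
differentiated away). As `u` is Lipschitz near `x̄`, these differences are `O(h)`, while the derivatives of the
reference Lagrange basis are bounded on the compact range `[-R, R]` of `s`. Hence
`|p_k^{(ℓ)}| ≤ c h^{1-ℓ}` on `[x_0, x_R]`, and
`h^{2ℓ-1} ∫ (p_k^{(ℓ)})² ≤ h^{2ℓ-1} · R h · c² h^{2-2ℓ} = R c² h²`.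
-/

open Polynomial

namespace Polynomial

theorem iterate_derivative_comp_C_mul_X_add_C {R : Type*} [CommSemiring R] (p : R[X]) (a b : R)
    (n : ℕ) :
    derivative^[n] (p.comp (C a * X + C b)) =
      C a ^ n * (derivative^[n] p).comp (C a * X + C b) := by
  induction n generalizing p with
  | zero => simp
  | succ n ih =>
    rw [Function.iterate_succ_apply, derivative_comp, Function.iterate_succ_apply]
    simp only [derivative_add, derivative_C_mul_X, derivative_C, add_zero, iterate_derivative_C_mul,
      ih, pow_succ]
    ring

end Polynomial

namespace Lagrange

variable {F ι : Type*} [Field F] [DecidableEq ι] {s : Finset ι} {v : ι → F}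

theorem interpolate_comp_C_mul_X_add_C (hvs : Set.InjOn v s) {a : F} (ha : a ≠ 0) (b : F)
    (r : ι → F) :
    (interpolate s (fun i => a * v i + b) r).comp (C a * X + C b) = interpolate s v r := by
  have hvs' : Set.InjOn (fun i => a * v i + b) s :=
    ((add_left_injective b).comp (mul_right_injective₀ ha)).comp_injOn hvs
  have hdeg : (C a * X + C b).degree = 1 := degree_linear ha
  refine eq_interpolate_of_eval_eq r hvs ?_ fun i hi => ?_
  · rw [degree_comp (by rw [hdeg]; exact zero_lt_one), hdeg, mul_one]
    exact degree_interpolate_lt r hvs'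
  · rw [eval_comp]
    simpa using eval_interpolate_at_node r hvs' hi

theorem interpolate_sub_const (hvs : Set.InjOn v s) (hs : s.Nonempty) (r : ι → F) (c : F) :
    interpolate s v (fun i => r i - c) = interpolate s v r - C c := by
  have : (fun i => r i - c) = r - c • 1 := by ext; simp
  rw [this, map_sub, map_smul, interpolate_one hvs hs, smul_eq_C_mul, mul_one]

theorem abs_eval_iterate_derivative_interpolate_le {s : Finset ι} {v r : ι → ℝ} {δ : ℝ}
    (hr : ∀ i ∈ s, |r i| ≤ δ) (n : ℕ) (x : ℝ) :
    |(derivative^[n] (interpolate s v r)).eval x| ≤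
      δ * ∑ i ∈ s, |(derivative^[n] (Lagrange.basis s v i)).eval x| := by
  rw [interpolate_apply, iterate_derivative_sum, eval_finsetSum, Finset.mul_sum]
  refine (Finset.abs_sum_le_sum_abs _ _).trans (Finset.sum_le_sum fun i hi => ?_)
  rw [iterate_derivative_C_mul, eval_mul, eval_C, abs_mul]
  exact mul_le_mul_of_nonneg_right (hr i hi) (abs_nonneg _)

end Lagrange

theorem intervalIntegral.integral_sq_le_of_abs_le {f : ℝ → ℝ} {a b B : ℝ} (hab : a ≤ b)
    (hf : ∀ t ∈ Set.Icc a b, |f t| ≤ B) : ∫ t in a..b, f t ^ 2 ≤ (b - a) * B ^ 2 := by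
  have hf2 : ∀ t ∈ Set.uIoc a b, ‖f t ^ 2‖ ≤ B ^ 2 := fun t ht => by
    rw [Set.uIoc_of_le hab] at ht
    rw [Real.norm_eq_abs, abs_pow]
    exact pow_le_pow_left₀ (abs_nonneg _) (hf t (Set.Ioc_subset_Icc_self ht)) 2
  calc ∫ t in a..b, f t ^ 2 ≤ ‖∫ t in a..b, f t ^ 2‖ := Real.le_norm_self _
    _ ≤ B ^ 2 * |b - a| := intervalIntegral.norm_integral_le_of_norm_le_const hf2
    _ = (b - a) * B ^ 2 := by rw [abs_of_nonneg (sub_nonneg.mpr hab), mul_comm]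

noncomputable def lebesgueFunctionDeriv (r0 n : ℕ) (s : ℝ) : ℝ :=
  ∑ j ∈ range (r0 + 1),
    |(derivative^[n] (Lagrange.basis (range (r0 + 1)) ((↑) : ℕ → ℝ) j)).eval s|

theorem exists_lebesgueFunctionDeriv_le (r0 n : ℕ) {A : Set ℝ} (hA : IsCompact A) :
    ∃ M, ∀ s ∈ A, lebesgueFunctionDeriv r0 n s ≤ M := by
  obtain ⟨M, hM⟩ := hA.exists_bound_of_continuousOn (f := lebesgueFunctionDeriv r0 n)
    (by unfold lebesgueFunctionDeriv; fun_prop)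
  exact ⟨M, fun s hs => (Real.le_norm_self _).trans (hM s hs)⟩

section Stencil

variable {r0 R k n : ℕ} {xb h : ℝ} {u : ℝ → ℝ}

theorem stencil_add (xb h : ℝ) (k j : ℕ) : stencil xb h (k + j) = h * j + stencil xb h k := by
  simp only [stencil]; push_cast; ring

theorem stencil_mem_Icc (hh : 0 ≤ h) {j : ℕ} (hj : j ≤ R) :
    stencil xb h j ∈ Set.Icc (stencil xb h 0) (stencil xb h R) := by
  have : (j : ℝ) ≤ R := by exact_mod_cast hj
  simp only [stencil, Set.mem_Icc, CharP.cast_eq_zero, zero_mul, add_zero]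
  constructor <;> nlinarith

theorem Icc_stencil_subset_ball {ε : ℝ} (hε : R * h < ε) :
    Set.Icc (stencil xb h 0) (stencil xb h R) ⊆ Metric.ball xb ε := fun y hy => by
  simp only [stencil, CharP.cast_eq_zero, zero_mul, add_zero, Set.mem_Icc] at hy
  rw [Metric.mem_ball, Real.dist_eq, abs_lt]
  constructor <;> nlinarith [hy.1, hy.2]

theorem interpPoly_comp_C_mul_X_add_C (hh : h ≠ 0) :
    (interpPoly r0 xb h u k).comp (C h * X + C (stencil xb h k)) =
      Lagrange.interpolate (range (r0 + 1)) (↑) fun j => u (stencil xb h (k + j)) := by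
  simp only [interpPoly, stencil_add]
  exact Lagrange.interpolate_comp_C_mul_X_add_C Nat.cast_injective.injOn hh _ _

theorem pow_mul_eval_iterate_derivative_interpPoly (hh : h ≠ 0) (hn : 0 < n) (t : ℝ) :
    h ^ n * (derivative^[n] (interpPoly r0 xb h u k)).eval t =
      (derivative^[n] (Lagrange.interpolate (range (r0 + 1)) (↑)
        fun j => u (stencil xb h (k + j)) - u (stencil xb h k))).eval
          ((t - stencil xb h k) / h) := by
  rw [Lagrange.interpolate_sub_const Nat.cast_injective.injOn nonempty_range_add_one,
    iterate_derivative_sub, iterate_derivative_C hn, sub_zero, ← interpPoly_comp_C_mul_X_add_C hh,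
    iterate_derivative_comp_C_mul_X_add_C, eval_mul, eval_comp]
  simp only [eval_pow, eval_C, eval_add, eval_mul, eval_X]
  rw [mul_div_cancel₀ _ hh, sub_add_cancel]

theorem abs_eval_iterate_derivative_interpPoly_le {K : NNReal} {M : ℝ} (hh : 0 < h)
    (hk : k + r0 ≤ R) (hn : 0 < n)
    (hu : LipschitzOnWith K u (Set.Icc (stencil xb h 0) (stencil xb h R)))
    (hM : ∀ s ∈ Set.Icc (-(R : ℝ)) R, lebesgueFunctionDeriv r0 n s ≤ M)
    {t : ℝ} (ht : t ∈ Set.Icc (stencil xb h 0) (stencil xb h R)) :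
    h ^ n * |(derivative^[n] (interpPoly r0 xb h u k)).eval t| ≤ K * r0 * M * h := by
  have hdiff : ∀ j ∈ range (r0 + 1),
      |u (stencil xb h (k + j)) - u (stencil xb h k)| ≤ K * r0 * h := fun j hj => by
    have hj : j ≤ r0 := Nat.lt_succ_iff.mp (mem_range.mp hj)
    have hjr : (j : ℝ) ≤ r0 := by exact_mod_cast hj
    calc |u (stencil xb h (k + j)) - u (stencil xb h k)|
        ≤ K * |stencil xb h (k + j) - stencil xb h k| := by
          simpa only [Real.dist_eq] using hu.dist_le_mul _
            (stencil_mem_Icc hh.le (by omega)) _ (stencil_mem_Icc hh.le (by omega))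
      _ = K * (j * h) := by rw [stencil_add, add_sub_cancel_right, abs_of_nonneg (by positivity),
          mul_comm (h : ℝ)]
      _ ≤ K * r0 * h := by rw [mul_assoc]; gcongr
  have hs : (t - stencil xb h k) / h ∈ Set.Icc (-(R : ℝ)) R := by
    have hkR : (k : ℝ) ≤ R := by exact_mod_cast (by omega : k ≤ R)
    simp only [stencil, CharP.cast_eq_zero, zero_mul, add_zero, Set.mem_Icc] at ht ⊢
    constructor
    · rw [le_div_iff₀ hh]; nlinarith
    · rw [div_le_iff₀ hh]; nlinarith
  rw [← abs_of_pos (pow_pos hh n), ← abs_mul,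
    pow_mul_eval_iterate_derivative_interpPoly hh.ne' hn]
  refine (Lagrange.abs_eval_iterate_derivative_interpolate_le hdiff n _).trans ?_
  calc (K * r0 * h) * lebesgueFunctionDeriv r0 n _ ≤ K * r0 * h * M := by gcongr; exact hM _ hs
    _ = K * r0 * M * h := by ring

theorem pow_mul_integral_sq_iterate_derivative_interpPoly_le {K : NNReal} {M : ℝ} (hh : 0 < h)
    (hk : k + r0 ≤ R) (hn : 0 < n)
    (hu : LipschitzOnWith K u (Set.Icc (stencil xb h 0) (stencil xb h R)))
    (hM : ∀ s ∈ Set.Icc (-(R : ℝ)) R, lebesgueFunctionDeriv r0 n s ≤ M) :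
    h ^ (2 * n - 1) * ∫ t in (stencil xb h 0)..(stencil xb h R),
      ((derivative^[n] (interpPoly r0 xb h u k)).eval t) ^ 2 ≤ R * (K * r0 * M) ^ 2 * h ^ 2 := by
  have hpow : h ^ (2 * n - 1) = h⁻¹ * (h ^ n) ^ 2 := by
    rw [← pow_mul, mul_comm n 2, pow_sub₀ _ hh.ne' (by omega), pow_one, mul_comm]
  have hlen : stencil xb h R - stencil xb h 0 = R * h := by simp [stencil]
  have hbound : (h ^ n) ^ 2 * ∫ t in (stencil xb h 0)..(stencil xb h R),
      ((derivative^[n] (interpPoly r0 xb h u k)).eval t) ^ 2 ≤ R * h * (K * r0 * M * h) ^ 2 := by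
    rw [← hlen, ← intervalIntegral.integral_const_mul]
    simp_rw [← mul_pow]
    refine intervalIntegral.integral_sq_le_of_abs_le (stencil_mem_Icc hh.le le_rfl).1
      fun t ht => ?_
    rw [abs_mul, abs_of_pos (pow_pos hh n)]
    exact abs_eval_iterate_derivative_interpPoly_le hh hk hn hu hM ht
  calc h ^ (2 * n - 1) * ∫ t in (stencil xb h 0)..(stencil xb h R),
        ((derivative^[n] (interpPoly r0 xb h u k)).eval t) ^ 2
      = h⁻¹ * ((h ^ n) ^ 2 * ∫ t in (stencil xb h 0)..(stencil xb h R),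
        ((derivative^[n] (interpPoly r0 xb h u k)).eval t) ^ 2) := by rw [hpow, mul_assoc]
    _ ≤ h⁻¹ * (R * h * (K * r0 * M * h) ^ 2) :=
        mul_le_mul_of_nonneg_left hbound (by positivity)
    _ = R * (K * r0 * M) ^ 2 * h ^ 2 := by field_simp

end Stencil

theorem smoothInd_le_of_smooth_general (r0 R : ℕ) (hR : r0 ≤ R)
    (u : ℝ → ℝ) (xb a b : ℝ) (ha : a < xb) (hb : xb < b)
    (hu : ContDiffOn ℝ (r0 + 1) u (Set.Ioo a b)) :
    ∃ C > 0, ∃ h₀ > 0, ∀ h, 0 < h → h < h₀ →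
      ∀ k ≤ R - r0, smoothInd r0 R xb h u k ≤ C * h ^ 2 := by
  obtain ⟨K, t, ht, hK⟩ := ((hu.contDiffAt (Ioo_mem_nhds ha hb)).of_le
    (by exact_mod_cast Nat.le_add_left 1 r0)).exists_lipschitzOnWith
  obtain ⟨ε, hε, hball⟩ := Metric.mem_nhds_iff.mp ht
  choose M hM using fun n =>
    exists_lebesgueFunctionDeriv_le r0 n (isCompact_Icc (a := -(R : ℝ)) (b := R))
  set C := ∑ n ∈ Icc 1 r0, R * (K * r0 * M n) ^ 2
  refine ⟨C + 1, by positivity, ε / (R + 1), by positivity, fun h hh hh₀ k hk => ?_⟩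
  have hRh : R * h < ε := by
    rw [lt_div_iff₀ (by positivity)] at hh₀
    nlinarith
  have hLip : LipschitzOnWith K u (Set.Icc (stencil xb h 0) (stencil xb h R)) :=
    hK.mono ((Icc_stencil_subset_ball hRh).trans hball)
  have hterm : ∀ n ∈ Icc 1 r0, h ^ (2 * n - 1) * ∫ t in (stencil xb h 0)..(stencil xb h R),
      ((derivative^[n] (interpPoly r0 xb h u k)).eval t) ^ 2 ≤ R * (K * r0 * M n) ^ 2 * h ^ 2 :=
    fun n hn => pow_mul_integral_sq_iterate_derivative_interpPoly_le hh (by omega)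
      (mem_Icc.mp hn).1 hLip (hM n)
  calc smoothInd r0 R xb h u k
      ≤ (1 / (r0 : ℝ)) * ∑ n ∈ Icc 1 r0, R * (K * r0 * M n) ^ 2 * h ^ 2 :=
        mul_le_mul_of_nonneg_left (sum_le_sum hterm) (by positivity)
    _ ≤ 1 * (C * h ^ 2) := by
        rw [sum_mul]
        gcongr
        rw [one_div]
        exact Nat.cast_inv_le_one r0
    _ ≤ (C + 1) * h ^ 2 := by nlinarith [sq_nonneg h]

/-- if `u` is `r0 + 1` times continuously differentiable on an open
interval containing `x̄`, then there are `C > 0` and `h₀ > 0` such that for every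
`0 < h < h₀` and every `0 ≤ k ≤ R − r0`, the smoothness indicator satisfies
`I_k ≤ C h²`. -/
theorem smoothInd_le_of_smooth (r0 R : ℕ) (hr0 : 1 ≤ r0) (hR : r0 ≤ R)
    (u : ℝ → ℝ) (xb a b : ℝ) (ha : a < xb) (hb : xb < b)
    (hu : ContDiffOn ℝ (r0 + 1) u (Set.Ioo a b)) :
    ∃ C > 0, ∃ h₀ > 0, ∀ h, 0 < h → h < h₀ →
      ∀ k ≤ R - r0, smoothInd r0 R xb h u k ≤ C * h ^ 2 :=
  smoothInd_le_of_smooth_general r0 R hR u xb a b ha hb hu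
end
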